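/- Under the same assumptions, the category of ffg-Bloom algebras for F is isomorphic to the slice (coslice) category (φF, ζ⁻¹)/Alg F of F-algebras under the initial ffg-Bloom algebra φF. -/

import Mathlib

open CategoryTheory CategoryTheory.Limits

/-- An `F`-coalgebra has free finitely generated carrier. -/
def Pffg (T : Monad (Type)) (F : T.Algebra ⥤ T.Algebra)
    (C : Endofunctor.Coalgebra F) : Prop :=
  ∃ X : Type, Finite X ∧ Nonempty (C.V ≅ T.free.obj X)

variable (T : Monad (Type)) (F : T.Algebra ⥤ T.Algebra)

/-- An ffg-Bloom algebra for `F`: an `F`-algebra together with a solution operation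
assigning to every coalgebra `c : TX ⟶ F(TX)` with `X` finite a morphism
`c† : TX ⟶ A`, satisfying the solution and functoriality axioms. -/
structure FfgBloom where
  A : T.Algebra
  a : F.obj A ⟶ A
  dag : ∀ (X : Type) (_ : Finite X)
    (c : T.free.obj X ⟶ F.obj (T.free.obj X)), T.free.obj X ⟶ A
  sol : ∀ (X : Type) (hX : Finite X) (c : T.free.obj X ⟶ F.obj (T.free.obj X)),
    dag X hX c = c ≫ F.map (dag X hX c) ≫ a
  funct : ∀ (X Y : Type) (hX : Finite X) (hY : Finite Y)
    (c : T.free.obj X ⟶ F.obj (T.free.obj X))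
    (d : T.free.obj Y ⟶ F.obj (T.free.obj Y))
    (m : (⟨T.free.obj X, c⟩ : Endofunctor.Coalgebra F) ⟶
      (⟨T.free.obj Y, d⟩ : Endofunctor.Coalgebra F)),
    dag X hX c = m.f ≫ dag Y hY d

namespace FfgBloom

variable {T F}

/-- A morphism of ffg-Bloom algebras: an `F`-algebra morphism preserving solutions. -/
@[ext]
structure Hom (B₁ B₂ : FfgBloom T F) where
  h : B₁.A ⟶ B₂.A
  alg : F.map h ≫ B₂.a = B₁.a ≫ h
  pres : ∀ (X : Type) (hX : Finite X) (c : T.free.obj X ⟶ F.obj (T.free.obj X)),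
    B₁.dag X hX c ≫ h = B₂.dag X hX c

instance : Category (FfgBloom T F) where
  Hom := Hom
  id B := ⟨𝟙 B.A, by simp, by simp⟩
  comp f g := ⟨f.h ≫ g.h, by rw [F.map_comp, Category.assoc, g.alg, reassoc_of% f.alg],
    fun X hX c => by rw [← Category.assoc, f.pres, g.pres]⟩

end FfgBloom

/-! Colimits of `T`-algebras over `Type` exist (by the adjoint functor theorem: every cocone
factors through a quotient of the free algebra on the disjoint union of the diagram), and the
forgetful functor from `F`-coalgebras creates colimits, so the carrier of `φF` is the colimit of
the carriers of all ffg coalgebras. For an ffg-Bloom algebra `B`, functoriality of `†` makes the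
solutions `c†` a cocone, whence a map `φF → B`; the solution axiom says exactly that it is an
`F`-algebra morphism out of `(φF, ζ⁻¹)`. Conversely `c† := h ∘ inj_c` defines an ffg-Bloom
algebra from such a morphism `h`. Both round trips are the identity because the injections
`inj_c` of coalgebras on free algebras are jointly epimorphic, every ffg coalgebra being
isomorphic to one of them. -/

namespace CategoryTheory.Monad.Algebra

variable {C : Type*} [Category C] {T : Monad C}

section OfMono

variable (X : T.Algebra) {Q : C} (e : Q ⟶ X.A) [Mono e] (a : T.obj Q ⟶ Q)
  (h : a ≫ e = T.map e ≫ X.a)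

def ofMono : T.Algebra where
  A := Q
  a := a
  unit := by
    rw [← cancel_mono e, Category.assoc, h, ← T.η.naturality_assoc, X.unit]
    simp
  assoc := by
    rw [← cancel_mono e]
    simp only [Category.assoc, h]
    rw [← T.μ.naturality_assoc, X.assoc, Functor.comp_map, ← T.map_comp_assoc,
      ← T.map_comp_assoc, h]

def toOfMono : ofMono X e a h ⟶ X where
  f := e
  h := h.symm

variable {X e a h} in
def liftOfMono {Y : T.Algebra} (k : Y ⟶ X) (g : Y.A ⟶ Q) (hg : g ≫ e = k.f) :
    Y ⟶ ofMono X e a h where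
  f := g
  h := by
    change T.map g ≫ a = Y.a ≫ g
    rw [← cancel_mono e, Category.assoc, h, ← T.map_comp_assoc, hg, k.h,
      Category.assoc, hg]

end OfMono

end CategoryTheory.Monad.Algebra

namespace CategoryTheory.Monad

variable {T : Monad Type}

section Coimage

variable {L : Type} {X : T.Algebra} (k : T.free.obj L ⟶ X)

def kerSetoid : Setoid (T.obj L) := Setoid.ker k.f

def coimageι : _root_.Quotient (kerSetoid k) ⟶ X.A := ↾Setoid.kerLift k.f

instance : Mono (coimageι k) := (mono_iff_injective _).2 (Setoid.kerLift_injective _)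

noncomputable def coimageStr :
    T.obj (_root_.Quotient (kerSetoid k)) ⟶ _root_.Quotient (kerSetoid k) :=
  T.map (↾_root_.Quotient.out) ≫ T.μ.app L ≫ ↾_root_.Quotient.mk _

lemma coimageStr_comp_coimageι : coimageStr k ≫ coimageι k = T.map (coimageι k) ≫ X.a := by
  have hout : (↾_root_.Quotient.out : _ ⟶ T.obj L) ≫ k.f = coimageι k := by
    ext q
    exact congrArg (coimageι k) (_root_.Quotient.out_eq q)
  have hk : T.μ.app L ≫ k.f = T.map k.f ≫ X.a := k.h.symm
  change T.map _ ≫ T.μ.app L ≫ k.f = _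
  rw [hk, ← hout]
  exact (T.map_comp_assoc _ _ _).symm

noncomputable def coimage : T.Algebra :=
  Algebra.ofMono X (coimageι k) (coimageStr k) (coimageStr_comp_coimageι k)

end Coimage

variable {S : Type} [SmallCategory S]

structure QuotientCocone (D : S ⥤ T.Algebra) : Type where
  rel : Setoid (T.obj (Σ j, (D.obj j).A))
  a : T.obj (_root_.Quotient rel) ⟶ _root_.Quotient rel
  unit : T.η.app _ ≫ a = 𝟙 _
  assoc : T.μ.app _ ≫ a = T.map a ≫ a
  ι : D ⟶ (Functor.const S).obj (⟨_root_.Quotient rel, a, unit, assoc⟩ : T.Algebra)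

/-- Every cocone factors through its image, a quotient cocone. -/
lemma solutionSetCondition_const :
    SolutionSetCondition.{0} (Functor.const S : T.Algebra ⥤ (S ⥤ T.Algebra)) := by
  intro D
  refine ⟨QuotientCocone D, fun c => ⟨_root_.Quotient c.rel, c.a, c.unit, c.assoc⟩,
    fun c => c.ι, fun X h => ?_⟩
  let L := Σ j, (D.obj j).A
  let k : T.free.obj L ⟶ X := (T.adj.homEquiv L X).symm (↾fun l => (h.app l.1).f l.2)
  let g (j : S) : (D.obj j).A ⟶ _root_.Quotient (kerSetoid k) :=
    ↾fun x => _root_.Quotient.mk _ (T.η.app L ⟨j, x⟩)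
  have hg (j : S) : g j ≫ coimageι k = (h.app j).f := by
    ext x
    exact types_congr_hom ((T.adj.homEquiv L X).apply_symm_apply _) ⟨j, x⟩
  let legs (j : S) : D.obj j ⟶ coimage k :=
    Algebra.liftOfMono (h := coimageStr_comp_coimageι k) (h.app j) (g j) (hg j)
  refine ⟨⟨kerSetoid k, coimageStr k, (coimage k).unit, (coimage k).assoc,
    { app := legs, naturality := fun j j' u => ?_ }⟩,
    Algebra.toOfMono _ _ _ (coimageStr_comp_coimageι k), ?_⟩
  · ext1
    rw [← cancel_mono (coimageι k)]
    change (D.map u).f ≫ g j' ≫ coimageι k = (g j ≫ 𝟙 _) ≫ coimageι k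
    rw [hg, Category.comp_id, hg]
    exact congrArg Algebra.Hom.f (h.naturality u)
  · ext j : 2
    exact Algebra.Hom.ext (hg j)

instance : HasColimitsOfSize.{0, 0} T.Algebra where
  has_colimits_of_shape S _ := by
    have : HasLimits T.Algebra := hasLimits_of_hasLimits_createsLimits T.forget
    have := isRightAdjoint_of_preservesLimits_of_solutionSetCondition _
      (solutionSetCondition_const (T := T) (S := S))
    exact hasColimitsOfShape_iff_isRightAdjoint_const.mpr this

end CategoryTheory.Monad

namespace CategoryTheory.Endofunctor.Coalgebra

variable {C : Type*} [Category C] {E : C ⥤ C} {J : Type*} [Category J] (D : J ⥤ Coalgebra E)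
  {c : Cocone (D ⋙ forget E)} (hc : IsColimit c)

def strNatTrans : D ⋙ forget E ⟶ (D ⋙ forget E) ⋙ E where
  app j := (D.obj j).str
  naturality _ _ u := ((D.map u).h).symm

def colimitStr : c.pt ⟶ E.obj c.pt :=
  hc.desc ((Cocone.precompose (strNatTrans D)).obj (E.mapCocone c))

lemma ι_colimitStr (j : J) :
    c.ι.app j ≫ colimitStr D hc = (strNatTrans D).app j ≫ E.map (c.ι.app j) :=
  hc.fac _ j

lemma colimitStr_desc (s : Cocone D) :
    colimitStr D hc ≫ E.map (hc.desc ((forget E).mapCocone s)) =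
      hc.desc ((forget E).mapCocone s) ≫ s.pt.str :=
  hc.hom_ext fun j => by
    have hfac : c.ι.app j ≫ hc.desc ((forget E).mapCocone s) = (s.ι.app j).f := hc.fac _ j
    rw [reassoc_of% ι_colimitStr D hc j, ← E.map_comp, hfac]
    exact (s.ι.app j).h.trans ((reassoc_of% hfac) s.pt.str).symm

def liftedCocone : Cocone D where
  pt := ⟨c.pt, colimitStr D hc⟩
  ι :=
    { app j := ⟨c.ι.app j, (ι_colimitStr D hc j).symm⟩
      naturality _ _ u := Hom.ext ((c.w u).trans (Category.comp_id _).symm) }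

def isColimitLiftedCocone : IsColimit (liftedCocone D hc) where
  desc s := ⟨hc.desc ((forget E).mapCocone s), colimitStr_desc D hc s⟩
  fac _ j := Hom.ext (hc.fac _ j)
  uniq s _ w := Hom.ext <| hc.hom_ext fun j =>
    (congrArg Hom.f (w j)).trans (hc.fac ((forget E).mapCocone s) j).symm

instance [HasColimit (D ⋙ forget E)] : PreservesColimit D (forget E) :=
  preservesColimit_of_preserves_colimit_cocone (isColimitLiftedCocone D (colimit.isColimit _))
    (colimit.isColimit _)

end CategoryTheory.Endofunctor.Coalgebra

namespace CategoryTheory.Endofunctor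

variable {C : Type*} [Category C] {E : C ⥤ C}

def Coalgebra.transport (V : Coalgebra E) {W : C} (e : V.V ≅ W) : Coalgebra E :=
  ⟨W, e.inv ≫ V.str ≫ E.map e.hom⟩

def Coalgebra.isoTransport (V : Coalgebra E) {W : C} (e : V.V ≅ W) : V ≅ V.transport e :=
  Coalgebra.isoMk e (e.hom_inv_id_assoc _).symm

lemma Algebra.eqToHom_f {A₁ A₂ : Algebra E} (p : A₁ = A₂) :
    (eqToHom p).f = eqToHom (congrArg Algebra.a p) := by
  subst p
  rfl

end CategoryTheory.Endofunctor

open Endofunctor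

-- The category of ffg coalgebras is large (carriers range over `Type`), but equivalent to the
-- small one on these objects.
def FinFreeCoalgebra : Type :=
  Σ n : ℕ, (T.free.obj (Fin n) ⟶ F.obj (T.free.obj (Fin n)))

def FinFreeCoalgebra.toFfg (s : FinFreeCoalgebra T F) :
    ObjectProperty.FullSubcategory (Pffg T F) :=
  ⟨⟨T.free.obj (Fin s.1), s.2⟩, Fin s.1, inferInstance, ⟨Iso.refl _⟩⟩

instance : (inducedFunctor (FinFreeCoalgebra.toFfg T F)).EssSurj where
  mem_essImage j := by
    obtain ⟨X, hX, ⟨e⟩⟩ := j.2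
    obtain ⟨n, ⟨eqv⟩⟩ := Finite.exists_equiv_fin X
    let e' : j.1.V ≅ T.free.obj (Fin n) := e ≪≫ T.free.mapIso eqv.toIso
    exact ⟨⟨n, (j.1.transport e').str⟩,
      ⟨(ObjectProperty.ι _).preimageIso (j.1.isoTransport e').symm⟩⟩

instance : HasColimitsOfShape (ObjectProperty.FullSubcategory (Pffg T F)) T.Algebra :=
  have : (inducedFunctor (FinFreeCoalgebra.toFfg T F)).IsEquivalence := {}
  hasColimitsOfShape_of_equivalence (inducedFunctor (FinFreeCoalgebra.toFfg T F)).asEquivalence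

namespace Pffg

variable {T F} {C : Coalgebra F} (hC : Pffg T F C)

def Gens : Type := hC.choose

lemma finite_gens : Finite hC.Gens := hC.choose_spec.1

noncomputable def carrierIso : C.V ≅ T.free.obj hC.Gens := hC.choose_spec.2.some

noncomputable def presStr : T.free.obj hC.Gens ⟶ F.obj (T.free.obj hC.Gens) :=
  (C.transport hC.carrierIso).str

noncomputable def presentation : C ≅ ⟨T.free.obj hC.Gens, hC.presStr⟩ :=
  C.isoTransport hC.carrierIso

end Pffg

namespace FfgBloom

variable {T F} (B : FfgBloom T F)

noncomputable def dagOf {C : Coalgebra F} (hC : Pffg T F C) : C.V ⟶ B.A :=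
  hC.presentation.hom.f ≫ B.dag hC.Gens hC.finite_gens hC.presStr

lemma dagOf_naturality {C C' : Coalgebra F} (hC : Pffg T F C) (hC' : Pffg T F C')
    (m : C ⟶ C') : m.f ≫ B.dagOf hC' = B.dagOf hC := by
  have h := B.funct _ _ hC.finite_gens hC'.finite_gens _ _
    (hC.presentation.inv ≫ m ≫ hC'.presentation.hom)
  have hconj : hC.presentation.hom.f ≫ (hC.presentation.inv ≫ m ≫ hC'.presentation.hom).f =
      m.f ≫ hC'.presentation.hom.f := by
    rw [← Coalgebra.comp_f, Iso.hom_inv_id_assoc, Coalgebra.comp_f]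
  rw [dagOf, dagOf, h, reassoc_of% hconj]

lemma dagOf_eq_dag (X : Type) (hX : Finite X) (c : T.free.obj X ⟶ F.obj (T.free.obj X))
    (hC : Pffg T F ⟨T.free.obj X, c⟩) : B.dagOf hC = B.dag X hX c :=
  (B.funct X hC.Gens hX hC.finite_gens c _ hC.presentation.hom).symm

noncomputable def cocone : Cocone (ObjectProperty.ι (Pffg T F) ⋙ Coalgebra.forget F) where
  pt := B.A
  ι :=
    { app j := B.dagOf j.2
      naturality _ _ u := (B.dagOf_naturality _ _ u.hom).trans (Category.comp_id _).symm }

def toAlgebra : Endofunctor.Algebra F := ⟨B.A, B.a⟩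

lemma eqToHom_h {B₁ B₂ : FfgBloom T F} (p : B₁ = B₂) :
    (eqToHom p).h = eqToHom (congrArg FfgBloom.A p) := by
  subst p
  rfl

section Initiality

variable [HasColimit (ObjectProperty.ι (Pffg T F))]

local notation "φF" => colimit (ObjectProperty.ι (Pffg T F))

noncomputable def phiIsColimit :
    IsColimit ((Coalgebra.forget F).mapCocone (colimit.cocone (ObjectProperty.ι (Pffg T F)))) :=
  isColimitOfPreserves _ (colimit.isColimit _)

def ffgOfFree (X : Type) (hX : Finite X) (c : T.free.obj X ⟶ F.obj (T.free.obj X)) :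
    ObjectProperty.FullSubcategory (Pffg T F) :=
  ⟨⟨T.free.obj X, c⟩, X, hX, ⟨Iso.refl _⟩⟩

noncomputable def inj (X : Type) (hX : Finite X) (c : T.free.obj X ⟶ F.obj (T.free.obj X)) :
    T.free.obj X ⟶ (φF).V :=
  (colimit.ι (ObjectProperty.ι (Pffg T F)) (ffgOfFree X hX c)).f

lemma inj_str (X : Type) (hX : Finite X) (c : T.free.obj X ⟶ F.obj (T.free.obj X)) :
    c ≫ F.map (inj X hX c) = inj X hX c ≫ (φF).str :=
  (colimit.ι (ObjectProperty.ι (Pffg T F)) (ffgOfFree X hX c)).h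

lemma ι_f_eq_presentation_inj (j : ObjectProperty.FullSubcategory (Pffg T F)) :
    (colimit.ι (ObjectProperty.ι (Pffg T F)) j).f =
      j.2.presentation.hom.f ≫ inj _ j.2.finite_gens j.2.presStr :=
  (congrArg Coalgebra.Hom.f (colimit.w (ObjectProperty.ι (Pffg T F))
    (ObjectProperty.homMk j.2.presentation.hom : j ⟶ ffgOfFree _ _ _))).symm

lemma colimit_hom_ext {W : T.Algebra} {f g : (φF).V ⟶ W}
    (h : ∀ X hX c, inj X hX c ≫ f = inj X hX c ≫ g) : f = g :=
  phiIsColimit.hom_ext fun j => by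
    change (colimit.ι (ObjectProperty.ι (Pffg T F)) j).f ≫ f =
      (colimit.ι (ObjectProperty.ι (Pffg T F)) j).f ≫ g
    rw [ι_f_eq_presentation_inj, Category.assoc, Category.assoc, h]

noncomputable def fromPhi : (φF).V ⟶ B.A :=
  phiIsColimit.desc B.cocone

lemma inj_fromPhi (X : Type) (hX : Finite X) (c : T.free.obj X ⟶ F.obj (T.free.obj X)) :
    inj X hX c ≫ B.fromPhi = B.dag X hX c :=
  (phiIsColimit.fac B.cocone _).trans (B.dagOf_eq_dag X hX c _)

lemma fromPhi_eq_str_comp : B.fromPhi = (φF).str ≫ F.map B.fromPhi ≫ B.a :=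
  colimit_hom_ext fun X hX c => by
    rw [inj_fromPhi, ← reassoc_of% inj_str, ← F.map_comp_assoc, inj_fromPhi]
    exact B.sol X hX c

lemma fromPhi_comp {B₁ B₂ : FfgBloom T F} (f : B₁ ⟶ B₂) :
    B₁.fromPhi ≫ f.h = B₂.fromPhi :=
  colimit_hom_ext fun X hX c => by
    rw [reassoc_of% inj_fromPhi, inj_fromPhi]
    exact f.pres X hX c

variable [IsIso (colimit (ObjectProperty.ι (Pffg T F))).str]

variable (T F) in
noncomputable abbrev phiAlgebra : Endofunctor.Algebra F := ⟨(φF).V, inv (φF).str⟩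

noncomputable def homFromPhi : phiAlgebra T F ⟶ B.toAlgebra :=
  ⟨B.fromPhi, (IsIso.eq_inv_comp _).2 B.fromPhi_eq_str_comp.symm⟩

noncomputable def ofUnder (u : Under (phiAlgebra T F)) : FfgBloom T F where
  A := u.right.a
  a := u.right.str
  dag X hX c := inj X hX c ≫ u.hom.f
  sol X hX c := by
    have hu : F.map u.hom.f ≫ u.right.str = inv (φF).str ≫ u.hom.f := u.hom.h
    rw [F.map_comp, Category.assoc, hu, reassoc_of% inj_str, IsIso.hom_inv_id_assoc]
  funct X Y hX hY c d m := by
    rw [← Category.assoc]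
    congr 1
    exact (congrArg Coalgebra.Hom.f (colimit.w (ObjectProperty.ι (Pffg T F))
      (ObjectProperty.homMk m : ffgOfFree X hX c ⟶ ffgOfFree Y hY d))).symm

noncomputable def toUnder : FfgBloom T F ⥤ Under (phiAlgebra T F) where
  obj B := Under.mk B.homFromPhi
  map f := Under.homMk ⟨f.h, f.alg⟩ (Endofunctor.Algebra.Hom.ext (fromPhi_comp f))

noncomputable def fromUnder : Under (phiAlgebra T F) ⥤ FfgBloom T F where
  obj := ofUnder
  map m := ⟨m.right.f, m.right.h, fun X hX c =>
    (Category.assoc _ _ _).trans (congrArg _ (congrArg Endofunctor.Algebra.Hom.f (Under.w m)))⟩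

lemma toUnder_comp_fromUnder : toUnder ⋙ fromUnder = 𝟭 (FfgBloom T F) := by
  have hobj (B : FfgBloom T F) : (toUnder ⋙ fromUnder).obj B = B := by
    obtain ⟨A, a, dag, sol, funct⟩ := B
    change FfgBloom.mk A a _ _ _ = _
    congr
    funext X hX c
    exact inj_fromPhi _ X hX c
  refine CategoryTheory.Functor.ext hobj fun B₁ B₂ f => ?_
  apply Hom.ext
  change f.h = (eqToHom (hobj B₁)).h ≫ f.h ≫ (eqToHom (hobj B₂).symm).h
  rw [eqToHom_h, eqToHom_h]
  exact (conj_eqToHom_iff_heq' _ _ _ _).2 HEq.rfl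

lemma fromUnder_comp_toUnder :
    fromUnder ⋙ toUnder = 𝟭 (Under (phiAlgebra T F)) := by
  have hobj (u : Under (phiAlgebra T F)) : (fromUnder ⋙ toUnder).obj u = u := by
    refine (congrArg Under.mk (Endofunctor.Algebra.Hom.ext ?_)).trans (StructuredArrow.eq_mk u).symm
    exact colimit_hom_ext fun X hX c => inj_fromPhi (ofUnder u) X hX c
  refine CategoryTheory.Functor.ext hobj fun u₁ u₂ m => ?_
  apply Under.UnderMorphism.ext
  apply Endofunctor.Algebra.Hom.ext
  change m.right.f =
    (eqToHom (hobj u₁)).right.f ≫ m.right.f ≫ (eqToHom (hobj u₂).symm).right.f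
  rw [Under.eqToHom_right, Under.eqToHom_right, Algebra.eqToHom_f, Algebra.eqToHom_f]
  exact (conj_eqToHom_iff_heq' _ _ _ _).2 HEq.rfl

end Initiality

end FfgBloom

theorem ffgBloom_iso_under_phiF
    [HasColimit (ObjectProperty.ι (Pffg T F))]
    [IsIso (colimit (ObjectProperty.ι (Pffg T F))).str] :
    ∃ (G : FfgBloom T F ⥤
        Under (⟨(colimit (ObjectProperty.ι (Pffg T F))).V,
          inv (colimit (ObjectProperty.ι (Pffg T F))).str⟩ :
            Endofunctor.Algebra F))
      (H : Under (⟨(colimit (ObjectProperty.ι (Pffg T F))).V,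
          inv (colimit (ObjectProperty.ι (Pffg T F))).str⟩ :
            Endofunctor.Algebra F) ⥤ FfgBloom T F),
      G ⋙ H = 𝟭 (FfgBloom T F) ∧ H ⋙ G = 𝟭 _ :=
  ⟨FfgBloom.toUnder, FfgBloom.fromUnder, FfgBloom.toUnder_comp_fromUnder,
    FfgBloom.fromUnder_comp_toUnder⟩
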